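/- Let Φ ⊆ V* be a finite root system with base Δ and positive roots Φ⁺ as in the context, and let J ⊆ Δ be a subset containing no connected component of the Dynkin diagram of Δ. Let W ≤ GL(V) be the Weyl group, generated by the reflections s_α : x ↦ x − ⟨α, x⟩α∨ for α ∈ Φ, and let W_J = ⟨s_α : α ∈ J⟩. Let C̄ = {x ∈ V : ⟨α, x⟩ ≥ 0 for all α ∈ Δ} be the closed dominant Weyl chamber. Then {x ∈ V : ⟨α, x⟩ ≥ 0 for every α ∈ Φ⁺ with α ∉ span_ℝ(J)} = ⋃_{w ∈ W_J} w(C̄). -/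

import Mathlib

variable {V : Type*} [AddCommGroup V] [Module ℝ V]

/-- The data of a finite (possibly non-reduced) root system `Φ` in the dual of the real
vector space `V`: every root `α` has a coroot `α∨` with `⟨α, α∨⟩ = 2`, the reflections
`s_α : χ ↦ χ - ⟨χ, α∨⟩ α` preserve `Φ`, and all pairings `⟨β, α∨⟩` are integers. -/
structure RootSystemData (V : Type*) [AddCommGroup V] [Module ℝ V] where
  Φ : Finset (Module.Dual ℝ V)
  coroot : Module.Dual ℝ V → V
  pairing_self : ∀ α ∈ Φ, α (coroot α) = 2
  reflection_mem : ∀ α ∈ Φ, ∀ β ∈ Φ, β - β (coroot α) • α ∈ Φ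
  pairing_int : ∀ α ∈ Φ, ∀ β ∈ Φ, ∃ m : ℤ, β (coroot α) = (m : ℝ)

/-- `Δ` is a base (system of simple roots) of the root system: it is linearly independent
and every root is either a nonnegative-integer or a nonpositive-integer combination of
elements of `Δ`. -/
structure RootSystemData.IsBase (R : RootSystemData V) (Δ : Finset (Module.Dual ℝ V)) :
    Prop where
  subset : Δ ⊆ R.Φ
  linearIndependent :
    LinearIndependent ℝ (fun a : (Δ : Set (Module.Dual ℝ V)) => (a : Module.Dual ℝ V))
  decomposition : ∀ α ∈ R.Φ,
    (∃ c : Module.Dual ℝ V → ℕ, α = ∑ β ∈ Δ, (c β : ℝ) • β) ∨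
    (∃ c : Module.Dual ℝ V → ℕ, α = -∑ β ∈ Δ, (c β : ℝ) • β)

/-- The set of positive roots with respect to the base `Δ`: the roots which are
nonnegative-integer combinations of simple roots. -/
def RootSystemData.posRoots (R : RootSystemData V) (Δ : Finset (Module.Dual ℝ V)) :
    Set (Module.Dual ℝ V) :=
  {α | α ∈ R.Φ ∧ ∃ c : Module.Dual ℝ V → ℕ, α = ∑ β ∈ Δ, (c β : ℝ) • β}

/-- The Dynkin diagram of the base `Δ`: two distinct simple roots are adjacent if and
only if they pair nontrivially against each other's coroots. -/
def RootSystemData.dynkin (R : RootSystemData V) (Δ : Finset (Module.Dual ℝ V)) :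
    SimpleGraph {a // a ∈ Δ} where
  Adj a b := a ≠ b ∧
    ((a : Module.Dual ℝ V) (R.coroot (b : Module.Dual ℝ V)) ≠ 0 ∨
      (b : Module.Dual ℝ V) (R.coroot (a : Module.Dual ℝ V)) ≠ 0)
  symm := ⟨fun a b h => ⟨h.1.symm, h.2.symm⟩⟩
  loopless := ⟨fun a h => h.1 rfl⟩

/-- The subgroup of `GL(V)` generated by the reflections `s_α : x ↦ x - ⟨α, x⟩ α∨`
for `α` ranging in a set `s` of roots. -/
def RootSystemData.weylSubgroup (R : RootSystemData V) (s : Set (Module.Dual ℝ V)) :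
    Subgroup (V ≃ₗ[ℝ] V) :=
  Subgroup.closure {w : V ≃ₗ[ℝ] V | ∃ α ∈ s, ∀ x : V, w x = x - α x • R.coroot α}

/-!
The group `W_J` acts on `V*` by `α ↦ α ∘ w`, and this action preserves the positive roots outside
`span J`: a simple reflection `s_β`, `β ∈ J`, changes only the `β`-coefficient of a root, so a
positive coefficient at a simple root outside `J` survives. Since positive roots are nonnegative
on the closed chamber, this gives `⋃ w(C̄) ⊆ cone`. Conversely, starting from `x` in the cone,
while some `β ∈ J` is negative at `x` replace `x` by `s_β x`. This stays in the cone, and strictly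
decreases the number of positive roots in `span J` that are negative at `x`, because `s_β`
permutes the positive roots that are not multiples of `β` and sends `β` to `-β`. When no such
`β` is left, `x` is dominant.
-/

lemma Finset.sum_sub_ite_smul {𝕜 M : Type*} [Ring 𝕜] [AddCommGroup M] [Module 𝕜 M]
    [DecidableEq M] {s : Finset M} {b : M} (hb : b ∈ s) (f : M → 𝕜) (t : 𝕜) :
    ∑ m ∈ s, (f m - if m = b then t else 0) • m = ∑ m ∈ s, f m • m - t • b := by
  simp [sub_smul, ite_smul, Finset.sum_sub_distrib, Finset.sum_ite_eq', hb]

namespace RootSystemData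

open Module Submodule

variable {R : RootSystemData V} {Δ : Finset (Dual ℝ V)}

/-- The weights `Φ(R_u(P), S)` of the unipotent radical of a pseudo-parabolic subgroup of
type `J`. -/
def unipotentRoots (R : RootSystemData V) (Δ J : Finset (Dual ℝ V)) : Set (Dual ℝ V) :=
  {α | α ∈ R.posRoots Δ ∧ α ∉ span ℝ (J : Set (Dual ℝ V))}

open Classical in
noncomputable def leviInversions (R : RootSystemData V) (Δ J : Finset (Dual ℝ V)) (y : V) :
    Finset (Dual ℝ V) :=
  R.Φ.filter fun α => α ∈ R.posRoots Δ ∧ α ∈ span ℝ (J : Set (Dual ℝ V)) ∧ α y < 0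

/-- The transpose `α ↦ α ∘ s_β` of the reflection `s_β`, see `comp_reflection`. -/
noncomputable def dualReflection (R : RootSystemData V) {β : Dual ℝ V}
    (h : β (R.coroot β) = 2) : Dual ℝ V ≃ₗ[ℝ] Dual ℝ V :=
  Module.reflection (x := β) (f := Dual.eval ℝ V (R.coroot β)) h

lemma dualReflection_apply {β : Dual ℝ V} (h : β (R.coroot β) = 2) (α : Dual ℝ V) :
    R.dualReflection h α = α - α (R.coroot β) • β :=
  Module.reflection_apply _ _

lemma dualReflection_apply_apply {β : Dual ℝ V} (h : β (R.coroot β) = 2) (α : Dual ℝ V)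
    (y : V) : R.dualReflection h α y = α (Module.reflection h y) := by
  simp only [dualReflection_apply, Module.reflection_apply, LinearMap.sub_apply,
    LinearMap.smul_apply, map_sub, map_smul, smul_eq_mul]
  ring

lemma comp_reflection {β : Dual ℝ V} (h : β (R.coroot β) = 2) (α : Dual ℝ V) :
    α ∘ₗ (Module.reflection h : V →ₗ[ℝ] V) = R.dualReflection h α :=
  LinearMap.ext fun y => (dualReflection_apply_apply h α y).symm

lemma dualReflection_involutive {β : Dual ℝ V} (h : β (R.coroot β) = 2) :
    Function.Involutive (R.dualReflection h) :=
  Module.involutive_reflection _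

lemma dualReflection_self {β : Dual ℝ V} (h : β (R.coroot β) = 2) :
    R.dualReflection h β = -β :=
  Module.reflection_apply_self _

lemma apply_nonneg_of_mem_posRoots {α : Dual ℝ V} (hα : α ∈ R.posRoots Δ) {x : V}
    (hx : ∀ γ ∈ Δ, 0 ≤ γ x) : 0 ≤ α x := by
  obtain ⟨-, c, rfl⟩ := hα
  simp only [LinearMap.coe_sum, Finset.sum_apply, LinearMap.smul_apply, smul_eq_mul]
  exact Finset.sum_nonneg fun β hβ => mul_nonneg (Nat.cast_nonneg _) (hx β hβ)

lemma exists_coeff_pos_of_notMem_span {α : Dual ℝ V} (hα : α ∈ R.posRoots Δ)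
    {s : Set (Dual ℝ V)} (hαs : α ∉ span ℝ s) :
    ∃ c : Dual ℝ V → ℕ, α = ∑ δ ∈ Δ, (c δ : ℝ) • δ ∧ ∃ γ ∈ Δ, γ ∉ s ∧ 0 < c γ := by
  obtain ⟨-, c, hc⟩ := hα
  refine ⟨c, hc, ?_⟩
  by_contra! hzero
  refine hαs (hc ▸ sum_mem fun δ hδ => ?_)
  by_cases hδs : δ ∈ s
  · exact smul_mem _ _ (subset_span hδs)
  · simp [Nat.le_zero.mp (hzero δ hδ hδs)]

namespace IsBase

variable (hΔ : R.IsBase Δ)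
include hΔ

lemma linearIndepOn : LinearIndepOn ℝ id (Δ : Set (Dual ℝ V)) :=
  hΔ.linearIndependent

lemma coeff_eq {f g : Dual ℝ V → ℝ} (hfg : ∑ δ ∈ Δ, f δ • δ = ∑ δ ∈ Δ, g δ • δ) :
    ∀ δ ∈ Δ, f δ = g δ :=
  linearIndepOn_finset_iffₛ.mp hΔ.linearIndepOn f g hfg

lemma notMem_span {s : Finset (Dual ℝ V)} (hs : s ⊆ Δ) {γ : Dual ℝ V} (hγ : γ ∈ Δ)
    (hγs : γ ∉ s) : γ ∉ span ℝ (s : Set (Dual ℝ V)) := by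
  have hΔs : LinearIndepOn ℝ id (s : Set (Dual ℝ V)) :=
    hΔ.linearIndepOn.mono (by exact_mod_cast hs)
  rw [hΔs.notMem_span_iff_id]
  exact ⟨hΔ.linearIndepOn.mono (Set.insert_subset hγ (by exact_mod_cast hs)),
    by exact_mod_cast hγs⟩

lemma mem_posRoots {γ : Dual ℝ V} (hγ : γ ∈ Δ) : γ ∈ R.posRoots Δ := by
  classical
  refine ⟨hΔ.subset hγ, fun δ => if δ = γ then 1 else 0, ?_⟩
  simp [ite_smul, hγ]

lemma mem_posRoots_of_coeff_pos {α : Dual ℝ V} (hα : α ∈ R.Φ) {r : Dual ℝ V → ℝ}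
    (hr : α = ∑ δ ∈ Δ, r δ • δ) {γ : Dual ℝ V} (hγ : γ ∈ Δ) (hpos : 0 < r γ) :
    α ∈ R.posRoots Δ := by
  rcases hΔ.decomposition α hα with ⟨c, hc⟩ | ⟨c, hc⟩
  · exact ⟨hα, c, hc⟩
  · have hneg : α = ∑ δ ∈ Δ, (-(c δ : ℝ)) • δ := by
      rw [hc, ← Finset.sum_neg_distrib]
      exact Finset.sum_congr rfl fun δ _ => (neg_smul _ _).symm
    have := hΔ.coeff_eq (hr.symm.trans hneg) γ hγ
    have : (0 : ℝ) ≤ c γ := Nat.cast_nonneg _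
    linarith

lemma nonneg_of_smul_mem_posRoots {β : Dual ℝ V} (hβ : β ∈ Δ) {t : ℝ}
    (ht : t • β ∈ R.posRoots Δ) : 0 ≤ t := by
  classical
  obtain ⟨-, c, hc⟩ := ht
  have hsingle : t • β = ∑ δ ∈ Δ, (if δ = β then t else 0) • δ := by simp [ite_smul, hβ]
  have := hΔ.coeff_eq (hsingle.symm.trans hc) β hβ
  rw [if_pos rfl] at this
  exact this ▸ Nat.cast_nonneg _

/-- `s_β` changes only the coefficient of `β`, so a positive coefficient outside `s` survives. -/
lemma dualReflection_mem_posRoots {s : Set (Dual ℝ V)} {β : Dual ℝ V} (hβΔ : β ∈ Δ)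
    (hβs : β ∈ s) (h : β (R.coroot β) = 2) {α : Dual ℝ V} (hα : α ∈ R.posRoots Δ)
    (hαs : α ∉ span ℝ s) : R.dualReflection h α ∈ R.posRoots Δ := by
  classical
  obtain ⟨c, hc, γ, hγΔ, hγs, hcγ⟩ := exists_coeff_pos_of_notMem_span hα hαs
  have hγβ : γ ≠ β := fun h => hγs (h ▸ hβs)
  refine hΔ.mem_posRoots_of_coeff_pos
    (r := fun δ => (c δ : ℝ) - if δ = β then α (R.coroot β) else 0) ?_ ?_ hγΔ ?_
  · rw [dualReflection_apply]
    exact R.reflection_mem β (hΔ.subset hβΔ) α hα.1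
  · rw [Finset.sum_sub_ite_smul hβΔ, ← hc, dualReflection_apply]
  · simpa [if_neg hγβ] using hcγ

lemma notMem_span_singleton_of_apply_reflection_neg {β : Dual ℝ V} (hβΔ : β ∈ Δ)
    (h : β (R.coroot β) = 2) {y : V} (hβy : β y < 0) {α : Dual ℝ V} (hα : α ∈ R.posRoots Δ)
    (hαy : α (Module.reflection h y) < 0) : α ∉ span ℝ {β} := by
  rintro hspan
  obtain ⟨t, rfl⟩ := mem_span_singleton.mp hspan
  have ht := hΔ.nonneg_of_smul_mem_posRoots hβΔ hα
  have hval : (t • β) (Module.reflection h y) = t * -β y := by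
    simp only [Module.reflection_apply, LinearMap.smul_apply, map_sub, map_smul, h, smul_eq_mul]
    ring
  rw [hval] at hαy
  exact hαy.not_ge (mul_nonneg ht (by linarith))

lemma dualReflection_mem_unipotentRoots {J : Finset (Dual ℝ V)} (hJ : J ⊆ Δ)
    {β : Dual ℝ V} (hβ : β ∈ J) (h : β (R.coroot β) = 2) {α : Dual ℝ V}
    (hα : α ∈ R.unipotentRoots Δ J) : R.dualReflection h α ∈ R.unipotentRoots Δ J := by
  refine ⟨hΔ.dualReflection_mem_posRoots (hJ hβ) hβ h hα.1 hα.2, fun hmem => hα.2 ?_⟩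
  have hα_eq : α = R.dualReflection h α + α (R.coroot β) • β := by
    rw [dualReflection_apply]; abel
  rw [hα_eq]
  exact add_mem hmem (smul_mem _ _ (subset_span (Finset.mem_coe.mpr hβ)))

lemma exists_eq_reflection_of_mem_generators {J : Finset (Dual ℝ V)} (hJ : J ⊆ Δ)
    {g : V ≃ₗ[ℝ] V} (hg : ∃ β ∈ (J : Set (Dual ℝ V)), ∀ x : V, g x = x - β x • R.coroot β) :
    ∃ β ∈ J, ∃ h : β (R.coroot β) = 2, g = Module.reflection h := by
  obtain ⟨β, hβ, hg⟩ := hg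
  have h := R.pairing_self β (hΔ.subset (hJ hβ))
  exact ⟨β, hβ, h, LinearEquiv.ext fun x => (hg x).trans (Module.reflection_apply x h).symm⟩

lemma comp_mem_unipotentRoots {J : Finset (Dual ℝ V)} (hJ : J ⊆ Δ) {w : V ≃ₗ[ℝ] V}
    (hw : w ∈ R.weylSubgroup J) {α : Dual ℝ V} (hα : α ∈ R.unipotentRoots Δ J) :
    α ∘ₗ (w : V →ₗ[ℝ] V) ∈ R.unipotentRoots Δ J := by
  induction hw using Subgroup.closure_induction'' generalizing α with
  | mem g hg =>
    obtain ⟨β, hβ, h, rfl⟩ := hΔ.exists_eq_reflection_of_mem_generators hJ hg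
    exact comp_reflection h α ▸ hΔ.dualReflection_mem_unipotentRoots hJ hβ h hα
  | inv_mem g hg =>
    obtain ⟨β, hβ, h, rfl⟩ := hΔ.exists_eq_reflection_of_mem_generators hJ hg
    exact comp_reflection h α ▸ hΔ.dualReflection_mem_unipotentRoots hJ hβ h hα
  | one => exact hα
  | mul u v _ _ hu hv => exact hv (hu hα)

lemma card_leviInversions_reflection_lt {J : Finset (Dual ℝ V)} (hJ : J ⊆ Δ)
    {β : Dual ℝ V} (hβ : β ∈ J) (h : β (R.coroot β) = 2) {y : V} (hβy : β y < 0) :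
    (R.leviInversions Δ J (Module.reflection h y)).card < (R.leviInversions Δ J y).card := by
  classical
  have hβΔ := hJ hβ
  have hβspan : β ∈ span ℝ (J : Set (Dual ℝ V)) := subset_span (Finset.mem_coe.mpr hβ)
  have hβmem : β ∈ R.leviInversions Δ J y := by
    simp only [leviInversions, Finset.mem_filter]
    exact ⟨hΔ.subset hβΔ, hΔ.mem_posRoots hβΔ, hβspan, hβy⟩
  have hmaps : (R.leviInversions Δ J (Module.reflection h y)).image (R.dualReflection h) ⊆
      (R.leviInversions Δ J y).erase β := by
    intro α' hα'
    obtain ⟨α, hα, rfl⟩ := Finset.mem_image.mp hα'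
    simp only [leviInversions, Finset.mem_filter] at hα
    obtain ⟨hαΦ, hαpos, hαJ, hαy⟩ := hα
    have hαβ := hΔ.notMem_span_singleton_of_apply_reflection_neg hβΔ h hβy hαpos hαy
    refine Finset.mem_erase.mpr ⟨fun hσα => hαβ ?_, ?_⟩
    · rw [← dualReflection_involutive h α, hσα, dualReflection_self]
      exact neg_mem (mem_span_singleton_self β)
    · simp only [leviInversions, Finset.mem_filter]
      refine ⟨?_, hΔ.dualReflection_mem_posRoots hβΔ (Set.mem_singleton β) h hαpos hαβ, ?_,
        (dualReflection_apply_apply h α y).symm ▸ hαy⟩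
      · rw [dualReflection_apply]; exact R.reflection_mem β (hΔ.subset hβΔ) α hαΦ
      · rw [dualReflection_apply]; exact sub_mem hαJ (smul_mem _ _ hβspan)
  calc (R.leviInversions Δ J (Module.reflection h y)).card
      = ((R.leviInversions Δ J (Module.reflection h y)).image (R.dualReflection h)).card :=
        (Finset.card_image_of_injective _ (R.dualReflection h).injective).symm
    _ ≤ ((R.leviInversions Δ J y).erase β).card := Finset.card_le_card hmaps
    _ < (R.leviInversions Δ J y).card := Finset.card_erase_lt_of_mem hβmem

lemma forall_simple_apply_nonneg {J : Finset (Dual ℝ V)} (hJ : J ⊆ Δ) {y : V}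
    (hy : ∀ α ∈ R.unipotentRoots Δ J, 0 ≤ α y) (hJy : ∀ β ∈ J, 0 ≤ β y) :
    ∀ γ ∈ Δ, 0 ≤ γ y := by
  intro γ hγ
  by_cases hγJ : γ ∈ J
  · exact hJy γ hγJ
  · exact hy γ ⟨hΔ.mem_posRoots hγ, hΔ.notMem_span hJ hγ hγJ⟩

theorem exists_mem_weylSubgroup_apply_dominant {J : Finset (Dual ℝ V)} (hJ : J ⊆ Δ) (y : V)
    (hy : ∀ α ∈ R.unipotentRoots Δ J, 0 ≤ α y) :
    ∃ w ∈ R.weylSubgroup J, ∃ z, (∀ γ ∈ Δ, 0 ≤ γ z) ∧ w z = y := by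
  by_cases hJy : ∀ β ∈ J, 0 ≤ β y
  · exact ⟨1, one_mem _, y, hΔ.forall_simple_apply_nonneg hJ hy hJy, rfl⟩
  push Not at hJy
  obtain ⟨β, hβ, hβy⟩ := hJy
  have h := R.pairing_self β (hΔ.subset (hJ hβ))
  have hy' : ∀ α ∈ R.unipotentRoots Δ J, 0 ≤ α (Module.reflection h y) := fun α hα =>
    dualReflection_apply_apply h α y ▸ hy _ (hΔ.dualReflection_mem_unipotentRoots hJ hβ h hα)
  obtain ⟨w, hw, z, hz, hzy⟩ :=
    exists_mem_weylSubgroup_apply_dominant hJ (Module.reflection h y) hy'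
  refine ⟨Module.reflection h * w,
    mul_mem (Subgroup.subset_closure ⟨β, hβ, fun x => Module.reflection_apply x h⟩) hw, z, hz, ?_⟩
  rw [LinearEquiv.mul_apply, hzy, Module.involutive_reflection]
termination_by (R.leviInversions Δ J y).card
decreasing_by exact hΔ.card_leviInversions_reflection_lt hJ hβ h hβy

end IsBase

end RootSystemData

theorem cone_eq_unionWeylTranslates_general
    (R : RootSystemData V) {Δ : Finset (Module.Dual ℝ V)} (hΔ : R.IsBase Δ)
    {J : Finset (Module.Dual ℝ V)} (hJ : J ⊆ Δ) :
    {x : V | ∀ α ∈ R.posRoots Δ,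
        α ∉ Submodule.span ℝ (J : Set (Module.Dual ℝ V)) → 0 ≤ α x} =
      ⋃ w ∈ R.weylSubgroup (J : Set (Module.Dual ℝ V)),
        (w : V → V) '' {x : V | ∀ α ∈ Δ, 0 ≤ α x} := by
  ext x
  constructor
  · intro hx
    obtain ⟨w, hw, z, hz, hzx⟩ :=
      hΔ.exists_mem_weylSubgroup_apply_dominant hJ x fun α hα => hx α hα.1 hα.2
    exact Set.mem_iUnion₂.mpr ⟨w, hw, z, hz, hzx⟩
  · intro hx α hα hαJ
    obtain ⟨w, hw, z, hz, rfl⟩ := Set.mem_iUnion₂.mp hx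
    exact R.apply_nonneg_of_mem_posRoots (hΔ.comp_mem_unipotentRoots hJ hw ⟨hα, hαJ⟩).1 hz

/-- Let `Φ` be a root system with base `Δ`, and let `J ⊆ Δ` contain no connected
component of the Dynkin diagram of `Δ`. Then the set of points on which every positive
root not lying in the span of `J` is nonnegative equals the union of the images of the
closed dominant Weyl chamber under the subgroup `W_J` generated by the simple
reflections `s_α`, `α ∈ J`. -/
theorem cone_eq_unionWeylTranslates [FiniteDimensional ℝ V]
    (R : RootSystemData V) {Δ : Finset (Module.Dual ℝ V)} (hΔ : R.IsBase Δ)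
    {J : Finset (Module.Dual ℝ V)} (hJ : J ⊆ Δ)
    (hJcomp : ∀ a : {a // a ∈ Δ}, ∃ b : {a // a ∈ Δ},
      (R.dynkin Δ).Reachable a b ∧ (b : Module.Dual ℝ V) ∉ J) :
    {x : V | ∀ α ∈ R.posRoots Δ,
        α ∉ Submodule.span ℝ (J : Set (Module.Dual ℝ V)) → 0 ≤ α x} =
      ⋃ w ∈ R.weylSubgroup (J : Set (Module.Dual ℝ V)),
        (w : V → V) '' {x : V | ∀ α ∈ Δ, 0 ≤ α x} :=
  cone_eq_unionWeylTranslates_general R hΔ hJ
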